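/- Let μ, ν be probability measures on ℝ^d with finite second moments, with μ absolutely continuous with respect to Lebesgue measure, and let T be a Brenier map from μ to ν. Then for every λ ∈ [0,1], the McCann interpolant μ_λ = (λ·Id + (1−λ)·T)_# μ is a Wasserstein barycenter of (μ, λ) and (ν, 1−λ); that is, for every probability measure ρ on ℝ^d with finite second moment, λ W2²(μ_λ, μ) + (1−λ) W2²(μ_λ, ν) ≤ λ W2²(ρ, μ) + (1−λ) W2²(ρ, ν). -/

import Mathlib

open MeasureTheory ENNReal NNReal Filter Topology

noncomputable section

/-- A coupling of `μ` and `ν`: a measure on the product whose marginals are `μ` and `ν`. -/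
def IsCoupling {E : Type*} [MeasurableSpace E] (π : Measure (E × E)) (μ ν : Measure E) : Prop :=
  π.map Prod.fst = μ ∧ π.map Prod.snd = ν

/-- Squared 2-Wasserstein distance: infimum over couplings of `∫ |x - y|² dπ`. -/
def W2sq {E : Type*} [NormedAddCommGroup E] [MeasurableSpace E] (μ ν : Measure E) : ℝ≥0∞ :=
  ⨅ (π : Measure (E × E)) (_ : IsCoupling π μ ν), ∫⁻ p, (‖p.1 - p.2‖₊ : ℝ≥0∞) ^ 2 ∂π

/-- The 2-Wasserstein distance. -/
def W2 {E : Type*} [NormedAddCommGroup E] [MeasurableSpace E] (μ ν : Measure E) : ℝ≥0∞ :=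
  W2sq μ ν ^ (1/2 : ℝ)

/-- A measure has a finite second moment. -/
def FiniteSecondMoment {E : Type*} [NormedAddCommGroup E] [MeasurableSpace E]
    (μ : Measure E) : Prop :=
  ∫⁻ x, (‖x‖₊ : ℝ≥0∞) ^ 2 ∂μ < ∞

/-- `T` is a Brenier map from `μ` to `ν`: it pushes `μ` forward to `ν`, coincides `μ`-a.e.
with the gradient of a convex function, and realizes the squared Wasserstein distance. -/
def IsBrenierMap {d : ℕ} (μ ν : Measure (EuclideanSpace ℝ (Fin d)))
    (T : EuclideanSpace ℝ (Fin d) → EuclideanSpace ℝ (Fin d)) : Prop :=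
  Measurable T ∧ μ.map T = ν ∧
  (∃ φ : EuclideanSpace ℝ (Fin d) → ℝ, ConvexOn ℝ Set.univ φ ∧
    ∀ᵐ x ∂μ, HasGradientAt φ (T x) x) ∧
  W2sq μ ν = ∫⁻ x, (‖T x - x‖₊ : ℝ≥0∞) ^ 2 ∂μ

/-!
With `S x = λx + (1-λ)T x`, the point `S x` lies at distance `(1-λ)|T x - x|` from `x` and
`λ|T x - x|` from `T x`, so the couplings `(S, id)_# μ` and `(S, T)_# μ` give
`λ W₂²(μ_λ, μ) + (1-λ) W₂²(μ_λ, ν) ≤ λ(1-λ) ∫ |T x - x|² dμ = λ(1-λ) W₂²(μ, ν)`.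
Conversely, for any `ρ`, glue couplings of `(ρ, μ)` and `(ρ, ν)` along `ρ` into a measure on
triples `(x, y, z)`; its `(y, z)`-marginal couples `μ` and `ν`, and integrating
`λ(1-λ)|y - z|² ≤ λ|x - y|² + (1-λ)|x - z|²` bounds `λ(1-λ) W₂²(μ, ν)` by the weighted cost
of `ρ`.
-/

open ProbabilityTheory

theorem mul_sq_le_of_le_add {lam a b c : ℝ} (h0 : 0 ≤ lam) (h1 : lam ≤ 1) (hc : 0 ≤ c)
    (hcab : c ≤ a + b) :
    lam * (1 - lam) * c ^ 2 ≤ lam * a ^ 2 + (1 - lam) * b ^ 2 :=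
  calc lam * (1 - lam) * c ^ 2 ≤ lam * (1 - lam) * (a + b) ^ 2 := by
        have := mul_nonneg h0 (sub_nonneg.2 h1)
        gcongr
    _ = lam * a ^ 2 + (1 - lam) * b ^ 2 - (lam * a - (1 - lam) * b) ^ 2 := by ring
    _ ≤ lam * a ^ 2 + (1 - lam) * b ^ 2 := sub_le_self _ (sq_nonneg _)

theorem ofReal_mul_sq_nnnorm_sub_le {E : Type*} [NormedAddCommGroup E] {lam : ℝ} (h0 : 0 ≤ lam)
    (h1 : lam ≤ 1) (x y z : E) :
    ENNReal.ofReal (lam * (1 - lam)) * (‖y - z‖₊ : ℝ≥0∞) ^ 2 ≤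
      ENNReal.ofReal lam * (‖x - y‖₊ : ℝ≥0∞) ^ 2 +
        ENNReal.ofReal (1 - lam) * (‖x - z‖₊ : ℝ≥0∞) ^ 2 := by
  have h1' : 0 ≤ 1 - lam := sub_nonneg.2 h1
  have hsq (v : E) : ENNReal.ofReal (‖v‖ ^ 2) = (‖v‖₊ : ℝ≥0∞) ^ 2 := by
    rw [ENNReal.ofReal_pow (norm_nonneg v), ofReal_norm, enorm_eq_nnnorm]
  have htri : ‖y - z‖ ≤ ‖x - y‖ + ‖x - z‖ := by
    simpa only [dist_eq_norm] using dist_triangle_left y z x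
  calc ENNReal.ofReal (lam * (1 - lam)) * (‖y - z‖₊ : ℝ≥0∞) ^ 2
      = ENNReal.ofReal (lam * (1 - lam) * ‖y - z‖ ^ 2) := by
        rw [ENNReal.ofReal_mul (mul_nonneg h0 h1'), hsq]
    _ ≤ ENNReal.ofReal (lam * ‖x - y‖ ^ 2 + (1 - lam) * ‖x - z‖ ^ 2) :=
        ENNReal.ofReal_le_ofReal (mul_sq_le_of_le_add h0 h1 (norm_nonneg _) htri)
    _ = _ := by
        rw [ENNReal.ofReal_add (by positivity) (by positivity), ENNReal.ofReal_mul h0,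
          ENNReal.ofReal_mul h1', hsq, hsq]

namespace MeasureTheory.Measure

variable {X Y Z : Type*} [MeasurableSpace X] [MeasurableSpace Y] [MeasurableSpace Z]
  [StandardBorelSpace Y] [Nonempty Y] [StandardBorelSpace Z] [Nonempty Z]

theorem exists_gluing (π₁ : Measure (X × Y)) (π₂ : Measure (X × Z)) [IsFiniteMeasure π₁]
    [IsFiniteMeasure π₂] (h : π₁.fst = π₂.fst) :
    ∃ m : Measure (X × Y × Z),
      m.map (Prod.map id Prod.fst) = π₁ ∧ m.map (Prod.map id Prod.snd) = π₂ := by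
  refine ⟨π₁.fst ⊗ₘ (π₁.condKernel ×ₖ π₂.condKernel), ?_, ?_⟩
  · rw [← compProd_map measurable_fst, ← Kernel.fst_eq, Kernel.fst_prod, disintegrate]
  · rw [← compProd_map measurable_snd, ← Kernel.snd_eq, Kernel.snd_prod, h, disintegrate]

end MeasureTheory.Measure

theorem IsCoupling.isFiniteMeasure {E : Type*} [MeasurableSpace E] {π : Measure (E × E)}
    {μ ν : Measure E} [IsFiniteMeasure μ] (h : IsCoupling π μ ν) : IsFiniteMeasure π :=
  ⟨by rw [← Measure.fst_univ, Measure.fst, h.1]; exact measure_lt_top μ _⟩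

theorem isCoupling_map_prodMk {α E : Type*} [MeasurableSpace α] [MeasurableSpace E]
    (μ : Measure α) {f g : α → E} (hf : Measurable f) (hg : Measurable g) :
    IsCoupling (μ.map fun x => (f x, g x)) (μ.map f) (μ.map g) :=
  ⟨by rw [Measure.map_map measurable_fst (hf.prodMk hg)]; rfl,
    by rw [Measure.map_map measurable_snd (hf.prodMk hg)]; rfl⟩

section Coupling

variable {E : Type*} [NormedAddCommGroup E] [MeasurableSpace E]

theorem IsCoupling.W2sq_le {π : Measure (E × E)} {μ ν : Measure E} (h : IsCoupling π μ ν) :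
    W2sq μ ν ≤ ∫⁻ p, (‖p.1 - p.2‖₊ : ℝ≥0∞) ^ 2 ∂π :=
  iInf₂_le π h

theorem W2sq_map_le {α : Type*} [MeasurableSpace α] (μ : Measure α) {f g : α → E}
    (hf : Measurable f) (hg : Measurable g) :
    W2sq (μ.map f) (μ.map g) ≤ ∫⁻ x, (‖f x - g x‖₊ : ℝ≥0∞) ^ 2 ∂μ :=
  (isCoupling_map_prodMk μ hf hg).W2sq_le.trans (lintegral_map_le _ _)

theorem le_mul_W2sq_add_mul_W2sq_of_forall_isCoupling {ρ μ ν : Measure E} {a b c : ℝ≥0∞}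
    (ha₀ : a ≠ 0) (ha : a ≠ ∞) (hb₀ : b ≠ 0) (hb : b ≠ ∞)
    (h : ∀ π₁ π₂, IsCoupling π₁ ρ μ → IsCoupling π₂ ρ ν →
      c ≤ a * ∫⁻ p, (‖p.1 - p.2‖₊ : ℝ≥0∞) ^ 2 ∂π₁ + b * ∫⁻ p, (‖p.1 - p.2‖₊ : ℝ≥0∞) ^ 2 ∂π₂) :
    c ≤ a * W2sq ρ μ + b * W2sq ρ ν := by
  simp only [W2sq, ENNReal.mul_iInf_of_ne ha₀ ha, ENNReal.mul_iInf_of_ne hb₀ hb,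
    ENNReal.iInf_add, ENNReal.add_iInf]
  exact le_iInf₂ fun π₂ h₂ => le_iInf₂ fun π₁ h₁ => h π₁ π₂ h₁ h₂

end Coupling

section Gluing

variable {E : Type*} [NormedAddCommGroup E] [MeasurableSpace E] [BorelSpace E]
  [SecondCountableTopology E]

theorem measurable_sq_nnnorm_sub :
    Measurable fun p : E × E => (‖p.1 - p.2‖₊ : ℝ≥0∞) ^ 2 := by
  fun_prop

variable [StandardBorelSpace E]

theorem mul_W2sq_le_of_isCoupling {ρ μ ν : Measure E} [IsFiniteMeasure ρ] {lam : ℝ}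
    (h0 : 0 ≤ lam) (h1 : lam ≤ 1) {π₁ π₂ : Measure (E × E)} (hπ₁ : IsCoupling π₁ ρ μ)
    (hπ₂ : IsCoupling π₂ ρ ν) :
    ENNReal.ofReal (lam * (1 - lam)) * W2sq μ ν ≤
      ENNReal.ofReal lam * ∫⁻ p, (‖p.1 - p.2‖₊ : ℝ≥0∞) ^ 2 ∂π₁ +
        ENNReal.ofReal (1 - lam) * ∫⁻ p, (‖p.1 - p.2‖₊ : ℝ≥0∞) ^ 2 ∂π₂ := by
  have : Nonempty E := ⟨0⟩
  have := hπ₁.isFiniteMeasure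
  have := hπ₂.isFiniteMeasure
  obtain ⟨m, hm₁, hm₂⟩ := Measure.exists_gluing π₁ π₂ (hπ₁.1.trans hπ₂.1.symm)
  have hπ : IsCoupling (m.map Prod.snd) μ ν := by
    constructor
    · rw [← hπ₁.2, ← hm₁, Measure.map_map measurable_fst measurable_snd,
        Measure.map_map measurable_snd (by fun_prop)]
      rfl
    · rw [← hπ₂.2, ← hm₂, Measure.map_map measurable_snd measurable_snd,
        Measure.map_map measurable_snd (by fun_prop)]
      rfl
  rw [← hm₁, ← hm₂, lintegral_map measurable_sq_nnnorm_sub (by fun_prop),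
    lintegral_map measurable_sq_nnnorm_sub (by fun_prop),
    ← lintegral_const_mul _ (by fun_prop), ← lintegral_const_mul _ (by fun_prop),
    ← lintegral_add_left (by fun_prop)]
  calc ENNReal.ofReal (lam * (1 - lam)) * W2sq μ ν
      ≤ ENNReal.ofReal (lam * (1 - lam)) * ∫⁻ p, (‖p.2.1 - p.2.2‖₊ : ℝ≥0∞) ^ 2 ∂m := by
        gcongr
        rw [← lintegral_map measurable_sq_nnnorm_sub measurable_snd]
        exact hπ.W2sq_le
    _ = ∫⁻ p, ENNReal.ofReal (lam * (1 - lam)) * (‖p.2.1 - p.2.2‖₊ : ℝ≥0∞) ^ 2 ∂m :=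
        (lintegral_const_mul _ (by fun_prop)).symm
    _ ≤ _ := lintegral_mono fun p => ofReal_mul_sq_nnnorm_sub_le h0 h1 p.1 p.2.1 p.2.2

theorem mul_W2sq_le_mul_W2sq_add_mul_W2sq (ρ μ ν : Measure E) [IsFiniteMeasure ρ] {lam : ℝ}
    (h0 : 0 ≤ lam) (h1 : lam ≤ 1) :
    ENNReal.ofReal (lam * (1 - lam)) * W2sq μ ν ≤
      ENNReal.ofReal lam * W2sq ρ μ + ENNReal.ofReal (1 - lam) * W2sq ρ ν := by
  rcases h0.eq_or_lt with rfl | h0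
  · simp
  rcases h1.eq_or_lt with rfl | h1
  · simp
  exact le_mul_W2sq_add_mul_W2sq_of_forall_isCoupling (by simpa) ENNReal.ofReal_ne_top
    (by simpa) ENNReal.ofReal_ne_top fun π₁ π₂ => mul_W2sq_le_of_isCoupling h0.le h1.le

end Gluing

section Interpolation

variable {E : Type*} [NormedAddCommGroup E] [NormedSpace ℝ E] [MeasurableSpace E] [BorelSpace E]
  [SecondCountableTopology E]

def mccannInterpolant (μ : Measure E) (T : E → E) (lam : ℝ) : Measure E :=
  μ.map fun x => lam • x + (1 - lam) • T x

theorem W2sq_map_smul_add_smul_le {α : Type*} [MeasurableSpace α] (μ : Measure α) {f g : α → E}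
    (hf : Measurable f) (hg : Measurable g) {a b : ℝ} (hab : a + b = 1) :
    W2sq (μ.map fun x => a • f x + b • g x) (μ.map g) ≤
      ‖a‖ₑ ^ 2 * ∫⁻ x, (‖f x - g x‖₊ : ℝ≥0∞) ^ 2 ∂μ := by
  refine (W2sq_map_le μ (by fun_prop) hg).trans_eq ?_
  rw [← lintegral_const_mul' _ _ (by simp)]
  refine lintegral_congr fun x => ?_
  have hx : a • f x + b • g x - g x = a • (f x - g x) := by
    obtain rfl : b = 1 - a := eq_sub_of_add_eq' hab
    module
  rw [hx, nnnorm_smul, ENNReal.coe_mul, mul_pow, enorm_eq_nnnorm]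

theorem ofReal_mul_W2sq_mccannInterpolant_add_le (μ : Measure E) {T : E → E} (hT : Measurable T)
    {lam : ℝ} (h0 : 0 ≤ lam) (h1 : lam ≤ 1) :
    ENNReal.ofReal lam * W2sq (mccannInterpolant μ T lam) μ +
        ENNReal.ofReal (1 - lam) * W2sq (mccannInterpolant μ T lam) (μ.map T) ≤
      ENNReal.ofReal (lam * (1 - lam)) * ∫⁻ x, (‖T x - x‖₊ : ℝ≥0∞) ^ 2 ∂μ := by
  have h1' : 0 ≤ 1 - lam := sub_nonneg.2 h1
  have hμ : W2sq (mccannInterpolant μ T lam) μ ≤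
      ‖1 - lam‖ₑ ^ 2 * ∫⁻ x, (‖T x - x‖₊ : ℝ≥0∞) ^ 2 ∂μ := by
    simpa only [mccannInterpolant, add_comm, id, Measure.map_id] using
      W2sq_map_smul_add_smul_le μ hT measurable_id (sub_add_cancel 1 lam)
  have hν : W2sq (mccannInterpolant μ T lam) (μ.map T) ≤
      ‖lam‖ₑ ^ 2 * ∫⁻ x, (‖T x - x‖₊ : ℝ≥0∞) ^ 2 ∂μ := by
    simpa only [mccannInterpolant, id, ← enorm_eq_nnnorm, enorm_sub_rev] using
      W2sq_map_smul_add_smul_le μ measurable_id hT (add_sub_cancel lam 1)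
  calc _ ≤ ENNReal.ofReal lam * (‖1 - lam‖ₑ ^ 2 * ∫⁻ x, (‖T x - x‖₊ : ℝ≥0∞) ^ 2 ∂μ) +
        ENNReal.ofReal (1 - lam) * (‖lam‖ₑ ^ 2 * ∫⁻ x, (‖T x - x‖₊ : ℝ≥0∞) ^ 2 ∂μ) := by
        gcongr
    _ = _ := by
        rw [Real.enorm_of_nonneg h0, Real.enorm_of_nonneg h1', ← mul_assoc, ← mul_assoc,
          ← add_mul, ← ENNReal.ofReal_pow h0, ← ENNReal.ofReal_pow h1',
          ← ENNReal.ofReal_mul h0, ← ENNReal.ofReal_mul h1',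
          ← ENNReal.ofReal_add (by positivity) (by positivity)]
        congr 2
        ring

end Interpolation

theorem mccann_interpolant_is_barycenter_general {d : ℕ}
    (μ ν : Measure (EuclideanSpace ℝ (Fin d)))
    (T : EuclideanSpace ℝ (Fin d) → EuclideanSpace ℝ (Fin d))
    (hT : IsBrenierMap μ ν T)
    (lam : ℝ) (hlam : lam ∈ Set.Icc (0 : ℝ) 1) :
    ∀ ρ : Measure (EuclideanSpace ℝ (Fin d)),
      IsProbabilityMeasure ρ → FiniteSecondMoment ρ →
      ENNReal.ofReal lam * W2sq (μ.map fun x => lam • x + (1 - lam) • T x) μ +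
          ENNReal.ofReal (1 - lam) * W2sq (μ.map fun x => lam • x + (1 - lam) • T x) ν ≤
        ENNReal.ofReal lam * W2sq ρ μ + ENNReal.ofReal (1 - lam) * W2sq ρ ν := by
  intro ρ _ _
  obtain ⟨hT_meas, hT_push, -, hT_cost⟩ := hT
  calc _ ≤ ENNReal.ofReal (lam * (1 - lam)) * W2sq μ ν := by
        rw [hT_cost, ← hT_push]
        exact ofReal_mul_W2sq_mccannInterpolant_add_le μ hT_meas hlam.1 hlam.2
    _ ≤ _ := mul_W2sq_le_mul_W2sq_add_mul_W2sq ρ μ ν hlam.1 hlam.2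

/-- McCann's interpolant is the barycenter of two measures: if `T` is a
Brenier map from `μ` to `ν` (`μ` absolutely continuous) then for every `λ ∈ [0,1]` the
measure `μ_λ = (λ Id + (1-λ) T)_# μ` minimizes
`ρ ↦ λ W₂²(ρ, μ) + (1-λ) W₂²(ρ, ν)` over probability measures with finite second moment. -/
theorem mccann_interpolant_is_barycenter {d : ℕ}
    (μ ν : Measure (EuclideanSpace ℝ (Fin d)))
    (hμ_prob : IsProbabilityMeasure μ) (hν_prob : IsProbabilityMeasure ν)
    (hμ_mom : FiniteSecondMoment μ) (hν_mom : FiniteSecondMoment ν)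
    (hμ_ac : μ ≪ volume)
    (T : EuclideanSpace ℝ (Fin d) → EuclideanSpace ℝ (Fin d))
    (hT : IsBrenierMap μ ν T)
    (lam : ℝ) (hlam : lam ∈ Set.Icc (0 : ℝ) 1) :
    ∀ ρ : Measure (EuclideanSpace ℝ (Fin d)),
      IsProbabilityMeasure ρ → FiniteSecondMoment ρ →
      ENNReal.ofReal lam * W2sq (μ.map fun x => lam • x + (1 - lam) • T x) μ +
          ENNReal.ofReal (1 - lam) * W2sq (μ.map fun x => lam • x + (1 - lam) • T x) ν ≤
        ENNReal.ofReal lam * W2sq ρ μ + ENNReal.ofReal (1 - lam) * W2sq ρ ν :=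
  mccann_interpolant_is_barycenter_general μ ν T hT lam hlam
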